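/- Let $\Gamma(z,t) = (4\pi t)^{-(m+1)/2}\exp(-|z|^2/(4t))$ be the heat kernel on $\mathbb{R}^{m+1}$ ($t>0$), and for $\varepsilon > 0$ and $y \in \mathbb{R}^{m+1}_+$ define $G^{\varepsilon}(x,y,t) = \Gamma(x-y,t) - \Gamma(x-y^*,t) - 2\int_0^{\infty} e^{-\frac{3}{4\varepsilon^2}\tau}\, D_{m+1}\Gamma(x-y^*+\tau e_{m+1}, t)\,d\tau$, where $y^*$ is the reflection of $y$ across $\{z_{m+1}=0\}$ and $e_{m+1} = (0,\dots,0,1)$. Then for every $x$ with $x_{m+1} = 0$, every $y \in \mathbb{R}^{m+1}_+$, and every $t > 0$, the oblique boundary condition $\frac{\partial G^{\varepsilon}}{\partial x_{m+1}}(x,y,t) - \frac{3}{4\varepsilon^2} G^{\varepsilon}(x,y,t) = 0$ holds. -/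

import Mathlib

/-!
At a boundary point `x`, `Γ(x - y*) = Γ(x - y)` and `D_{m+1}Γ(x - y*) = -D_{m+1}Γ(x - y)`.
For `J(z) = ∫₀^∞ e^{-aτ} D_{m+1}Γ(z + τe_{m+1}) dτ` with `a = 3/(4ε²)`, differentiating under the
integral and integrating by parts in `τ` gives `∂_{m+1}J(z) = a J(z) - D_{m+1}Γ(z)`: the boundary
term at infinity vanishes because `D_{m+1}Γ` is bounded. Hence
`∂_{m+1}G^ε - a G^ε = D_{m+1}Γ(x - y) + D_{m+1}Γ(x - y*) = 0`.
-/

noncomputable section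

/-- The heat kernel `Γ(z,t) = (4πt)^{-(m+1)/2} exp(-|z|²/(4t))` on `ℝ^{m+1}`. -/
def heatK (m : ℕ) (z : EuclideanSpace ℝ (Fin (m + 1))) (t : ℝ) : ℝ :=
  1 / (4 * Real.pi * t) ^ (((m : ℝ) + 1) / 2) * Real.exp (-‖z‖ ^ 2 / (4 * t))

/-- Reflection `y ↦ y*` across the hyperplane `{z_{m+1} = 0}`. -/
def reflect {m : ℕ} (y : EuclideanSpace ℝ (Fin (m + 1))) : EuclideanSpace ℝ (Fin (m + 1)) :=
  WithLp.toLp 2 (fun i => if i = Fin.last m then -y i else y i)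

/-- `D_{m+1}Γ(z,t)`: partial derivative of the heat kernel in the `(m+1)`-st coordinate. -/
def Dlast (m : ℕ) (z : EuclideanSpace ℝ (Fin (m + 1))) (t : ℝ) : ℝ :=
  fderiv ℝ (fun w => heatK m w t) z (EuclideanSpace.single (Fin.last m) 1)

/-- The Green function
`G^ε(x,y,t) = Γ(x-y,t) - Γ(x-y*,t) - 2∫₀^∞ e^{-3τ/(4ε²)} D_{m+1}Γ(x-y*+τe_{m+1},t) dτ`. -/
def Gve (m : ℕ) (ε : ℝ) (y : EuclideanSpace ℝ (Fin (m + 1))) (t : ℝ)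
    (x : EuclideanSpace ℝ (Fin (m + 1))) : ℝ :=
  heatK m (x - y) t - heatK m (x - reflect y) t -
    2 * ∫ τ in Set.Ioi (0 : ℝ),
      Real.exp (-(3 / (4 * ε ^ 2)) * τ) *
        Dlast m (x - reflect y + τ • EuclideanSpace.single (Fin.last m) 1) t

open MeasureTheory Real Set Filter Topology

lemma sq_mul_exp_neg_sq_div_le {k : ℝ} (hk : 0 < k) (s : ℝ) :
    s ^ 2 * exp (-s ^ 2 / k) ≤ k := by
  rw [neg_div, exp_neg, ← div_eq_mul_inv, div_le_iff₀ (exp_pos _)]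
  calc s ^ 2 = k * (s ^ 2 / k) := by field_simp
    _ ≤ k * exp (s ^ 2 / k) := by gcongr; linarith [add_one_le_exp (s ^ 2 / k)]

lemma mul_exp_neg_sq_div_le {k : ℝ} (hk : 0 < k) {s : ℝ} (hs : 0 ≤ s) :
    s * exp (-s ^ 2 / k) ≤ 1 + k := by
  have h1 : exp (-s ^ 2 / k) ≤ 1 :=
    exp_le_one_iff.2 (div_nonpos_of_nonpos_of_nonneg (by nlinarith) hk.le)
  nlinarith [sq_mul_exp_neg_sq_div_le hk s, exp_pos (-s ^ 2 / k)]

section ExpLineIntegral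

variable {E G : Type*} [NormedAddCommGroup E] [NormedSpace ℝ E]
  [NormedAddCommGroup G] [NormedSpace ℝ G]

noncomputable def expLineIntegral (a : ℝ) (F : E → ℝ) (v z : E) : ℝ :=
  ∫ τ in Ioi (0 : ℝ), exp (-a * τ) * F (z + τ • v)

lemma integrableOn_exp_smul_of_bdd {a C : ℝ} (ha : 0 < a) {g : ℝ → G} (hg : Continuous g)
    (hC : ∀ τ, ‖g τ‖ ≤ C) : IntegrableOn (fun τ => exp (-a * τ) • g τ) (Ioi 0) :=
  (exp_neg_integrableOn_Ioi 0 ha).smul_bdd C hg.aestronglyMeasurable (ae_of_all _ hC)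

lemma integral_exp_mul_deriv {a C C' : ℝ} (ha : 0 < a) {g g' : ℝ → ℝ}
    (hg : ∀ τ, HasDerivAt g (g' τ) τ) (hg' : Continuous g')
    (hgC : ∀ τ, ‖g τ‖ ≤ C) (hg'C : ∀ τ, ‖g' τ‖ ≤ C') :
    ∫ τ in Ioi 0, exp (-a * τ) * g' τ = a * (∫ τ in Ioi 0, exp (-a * τ) * g τ) - g 0 := by
  have hcont : Continuous g := continuous_iff_continuousAt.2 fun τ => (hg τ).continuousAt
  have hexp : ∀ τ, HasDerivAt (fun σ => exp (-a * σ)) (-a * exp (-a * τ)) τ := fun τ => by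
    simpa [mul_comm] using ((hasDerivAt_id τ).const_mul (-a)).exp
  have hdecay : Tendsto (fun τ => exp (-a * τ) * g τ) atTop (𝓝 0) := by
    have hexp0 : Tendsto (fun τ => exp (-a * τ)) atTop (𝓝 0) :=
      tendsto_exp_atBot.comp (tendsto_id.const_mul_atTop_of_neg (neg_neg_of_pos ha))
    refine squeeze_zero_norm (fun τ => ?_) (zero_mul C ▸ hexp0.mul_const C)
    rw [norm_mul, norm_of_nonneg (exp_pos _).le]
    exact mul_le_mul_of_nonneg_left (hgC τ) (exp_pos _).le
  have hzero : Tendsto (fun τ => exp (-a * τ) * g τ) (𝓝[>] 0) (𝓝 (g 0)) := by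
    have : ContinuousAt (fun τ => exp (-a * τ) * g τ) 0 := by fun_prop
    simpa using this.tendsto.mono_left nhdsWithin_le_nhds
  have hparts := integral_Ioi_mul_deriv_eq_deriv_mul (fun τ _ => hexp τ) (fun τ _ => hg τ)
    (integrableOn_exp_smul_of_bdd ha hg' hg'C)
    (IntegrableOn.congr_fun ((integrableOn_exp_smul_of_bdd ha hcont hgC).const_mul (-a))
      (fun τ _ => by simp only [Pi.mul_apply, smul_eq_mul]; ring) measurableSet_Ioi) hzero hdecay
  simp only [mul_assoc, integral_const_mul] at hparts
  rw [hparts]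
  ring

lemma hasFDerivAt_expLineIntegral {a C C' : ℝ} (ha : 0 < a) {F : E → ℝ} (hF : ContDiff ℝ 1 F)
    (hFC : ∀ z, ‖F z‖ ≤ C) (hF'C : ∀ z, ‖fderiv ℝ F z‖ ≤ C') (v z : E) :
    HasFDerivAt (expLineIntegral a F v)
      (∫ τ in Ioi 0, exp (-a * τ) • fderiv ℝ F (z + τ • v)) z := by
  have hdiff : Differentiable ℝ F := hF.differentiable one_ne_zero
  have hF' : Continuous (fderiv ℝ F) := hF.continuous_fderiv one_ne_zero
  have hline : ∀ x : E, Continuous fun τ : ℝ => x + τ • v := by fun_prop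
  refine hasFDerivAt_integral_of_dominated_of_fderiv_le (s := univ)
    (F := fun x τ => exp (-a * τ) * F (x + τ • v))
    (F' := fun x τ => exp (-a * τ) • fderiv ℝ F (x + τ • v))
    (bound := fun τ => exp (-a * τ) * C') univ_mem
    (Eventually.of_forall fun x => (by fun_prop : Continuous _).aestronglyMeasurable)
    (integrableOn_exp_smul_of_bdd ha (hdiff.continuous.comp (hline z)) fun τ => hFC _)
    ((continuous_const.mul continuous_id).rexp.smul (hF'.comp (hline z))).aestronglyMeasurable
    (ae_of_all _ fun τ x _ => ?_) ((exp_neg_integrableOn_Ioi 0 ha).mul_const C')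
    (ae_of_all _ fun τ x _ => ?_)
  · rw [norm_smul, norm_of_nonneg (exp_pos _).le]
    exact mul_le_mul_of_nonneg_left (hF'C _) (exp_pos _).le
  · simpa using ((hdiff _).hasFDerivAt.comp x ((hasFDerivAt_id x).add_const (τ • v))).const_mul
      (exp (-a * τ))

lemma fderiv_expLineIntegral_apply {a C C' : ℝ} (ha : 0 < a) {F : E → ℝ} (hF : ContDiff ℝ 1 F)
    (hFC : ∀ z, ‖F z‖ ≤ C) (hF'C : ∀ z, ‖fderiv ℝ F z‖ ≤ C') (v z : E) :
    fderiv ℝ (expLineIntegral a F v) z v = a * expLineIntegral a F v z - F z := by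
  have hdiff : Differentiable ℝ F := hF.differentiable one_ne_zero
  have hF' : Continuous (fderiv ℝ F) := hF.continuous_fderiv one_ne_zero
  have hline : Continuous fun τ : ℝ => z + τ • v := by fun_prop
  have hderiv : ∀ τ : ℝ, HasDerivAt (fun σ : ℝ => F (z + σ • v)) (fderiv ℝ F (z + τ • v) v) τ :=
    fun τ => (hdiff _).hasFDerivAt.comp_hasDerivAt τ
      (by simpa using ((hasDerivAt_id τ).smul_const v).const_add z)
  have hint := integrableOn_exp_smul_of_bdd (g := fun τ => fderiv ℝ F (z + τ • v)) ha
    (hF'.comp hline) fun τ => hF'C _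
  rw [(hasFDerivAt_expLineIntegral ha hF hFC hF'C v z).fderiv,
    ContinuousLinearMap.integral_apply hint]
  simpa [expLineIntegral] using integral_exp_mul_deriv ha hderiv (by fun_prop) (fun τ => hFC _)
    fun τ => (ContinuousLinearMap.le_opNorm _ v).trans
      (mul_le_mul_of_nonneg_right (hF'C _) (norm_nonneg v))

end ExpLineIntegral

section HeatKernel

variable {m : ℕ} {t : ℝ}

lemma heatK_eq_mul_exp (z : EuclideanSpace ℝ (Fin (m + 1))) :
    heatK m z t = heatK m 0 t * exp (-‖z‖ ^ 2 / (4 * t)) := by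
  simp [heatK]

lemma heatK_nonneg (ht : 0 < t) (z : EuclideanSpace ℝ (Fin (m + 1))) : 0 ≤ heatK m z t := by
  have : 0 < 4 * π * t := by positivity
  unfold heatK
  positivity

lemma heatK_le_heatK_zero (ht : 0 < t) (z : EuclideanSpace ℝ (Fin (m + 1))) :
    heatK m z t ≤ heatK m 0 t := by
  rw [heatK_eq_mul_exp z]
  refine mul_le_of_le_one_right (heatK_nonneg ht 0) (exp_le_one_iff.2 ?_)
  exact div_nonpos_of_nonpos_of_nonneg (by nlinarith [norm_nonneg z]) (by positivity)

lemma norm_mul_heatK_le (ht : 0 < t) (z : EuclideanSpace ℝ (Fin (m + 1))) :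
    ‖z‖ * heatK m z t ≤ (1 + 4 * t) * heatK m 0 t := by
  rw [heatK_eq_mul_exp z, mul_left_comm, mul_comm (1 + 4 * t)]
  exact mul_le_mul_of_nonneg_left (mul_exp_neg_sq_div_le (by positivity) (norm_nonneg z))
    (heatK_nonneg ht 0)

lemma norm_sq_mul_heatK_le (ht : 0 < t) (z : EuclideanSpace ℝ (Fin (m + 1))) :
    ‖z‖ ^ 2 * heatK m z t ≤ 4 * t * heatK m 0 t := by
  rw [heatK_eq_mul_exp z, mul_left_comm, mul_comm (4 * t)]
  exact mul_le_mul_of_nonneg_left (sq_mul_exp_neg_sq_div_le (by positivity) _)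
    (heatK_nonneg ht 0)

lemma contDiff_heatK {n : WithTop ℕ∞} :
    ContDiff ℝ n fun z : EuclideanSpace ℝ (Fin (m + 1)) => heatK m z t := by
  unfold heatK
  exact contDiff_const.mul ((contDiff_norm_sq ℝ).neg.div_const _).exp

lemma hasFDerivAt_heatK (z : EuclideanSpace ℝ (Fin (m + 1))) :
    HasFDerivAt (fun w => heatK m w t) ((-(heatK m z t / (2 * t))) • innerSL ℝ z) z := by
  have h := (((hasStrictFDerivAt_norm_sq z).hasFDerivAt.const_mul (-1 / (4 * t))).exp).const_mul
    (1 / (4 * π * t) ^ (((m : ℝ) + 1) / 2))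
  have hfun : (fun w : EuclideanSpace ℝ (Fin (m + 1)) => heatK m w t) =
      fun w => 1 / (4 * π * t) ^ (((m : ℝ) + 1) / 2) * exp (-1 / (4 * t) * ‖w‖ ^ 2) := by
    ext w
    rw [heatK]
    ring_nf
  rw [hfun]
  refine h.congr_fderiv ?_
  ext w
  simp only [heatK, smul_apply, smul_eq_mul, innerSL_apply_apply]
  ring_nf

lemma Dlast_eq (z : EuclideanSpace ℝ (Fin (m + 1))) :
    Dlast m z t = -(heatK m z t / (2 * t)) * z (Fin.last m) := by
  simp [Dlast, (hasFDerivAt_heatK z).fderiv, EuclideanSpace.inner_single_right]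

lemma contDiff_Dlast : ContDiff ℝ 1 fun z : EuclideanSpace ℝ (Fin (m + 1)) => Dlast m z t :=
  (contDiff_heatK.fderiv_right (m := 1) le_rfl).clm_apply contDiff_const

lemma norm_Dlast_le (ht : 0 < t) (z : EuclideanSpace ℝ (Fin (m + 1))) :
    ‖Dlast m z t‖ ≤ (1 + 4 * t) * heatK m 0 t / (2 * t) := by
  rw [Dlast_eq, norm_mul, norm_neg, norm_div, norm_of_nonneg (heatK_nonneg ht z),
    norm_of_nonneg (by positivity : (0 : ℝ) ≤ 2 * t), div_mul_eq_mul_div, mul_comm]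
  gcongr ?_ / _
  exact (mul_le_mul_of_nonneg_right (PiLp.norm_apply_le z _) (heatK_nonneg ht z)).trans
    (norm_mul_heatK_le ht z)

lemma hasFDerivAt_Dlast (z : EuclideanSpace ℝ (Fin (m + 1))) :
    HasFDerivAt (fun w => Dlast m w t)
      ((-(1 / (2 * t))) • (z (Fin.last m) • (-(heatK m z t / (2 * t))) • innerSL ℝ z +
        heatK m z t • EuclideanSpace.proj (Fin.last m))) z := by
  have h := (((EuclideanSpace.proj (Fin.last m)).hasFDerivAt (x := z)).mul
    (hasFDerivAt_heatK (t := t) z)).const_mul (-(1 / (2 * t)))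
  refine h.congr_of_eventuallyEq (Eventually.of_forall fun w => ?_)
  simp only [Dlast_eq, Pi.mul_apply, EuclideanSpace.coe_proj]
  ring

lemma norm_fderiv_Dlast_le (ht : 0 < t) (z : EuclideanSpace ℝ (Fin (m + 1))) :
    ‖fderiv ℝ (fun w => Dlast m w t) z‖ ≤ 3 * heatK m 0 t / (2 * t) := by
  have hΓ := heatK_nonneg ht z
  have h2t : (0 : ℝ) < 2 * t := by positivity
  have hA : ‖z (Fin.last m) • (-(heatK m z t / (2 * t))) • innerSL ℝ z‖ ≤ 2 * heatK m 0 t := by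
    rw [norm_smul, norm_smul, norm_neg, innerSL_apply_norm, norm_div, norm_of_nonneg hΓ,
      norm_of_nonneg h2t.le]
    calc ‖z (Fin.last m)‖ * (heatK m z t / (2 * t) * ‖z‖)
        ≤ ‖z‖ * (heatK m z t / (2 * t) * ‖z‖) := by gcongr; exact PiLp.norm_apply_le z _
      _ = ‖z‖ ^ 2 * heatK m z t / (2 * t) := by ring
      _ ≤ 4 * t * heatK m 0 t / (2 * t) := by gcongr ?_ / _; exact norm_sq_mul_heatK_le ht z
      _ = 2 * heatK m 0 t := by field_simp; ring
  have hB : ‖heatK m z t • EuclideanSpace.proj (𝕜 := ℝ) (Fin.last m)‖ ≤ heatK m 0 t := by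
    rw [norm_smul, norm_of_nonneg hΓ]
    refine (mul_le_of_le_one_right hΓ ?_).trans (heatK_le_heatK_zero ht z)
    refine ContinuousLinearMap.opNorm_le_bound _ zero_le_one fun w => ?_
    rw [one_mul, EuclideanSpace.coe_proj]
    exact PiLp.norm_apply_le w (Fin.last m)
  rw [(hasFDerivAt_Dlast z).fderiv, norm_smul, norm_neg, norm_div, norm_one,
    norm_of_nonneg h2t.le]
  calc 1 / (2 * t) * ‖_‖ ≤ 1 / (2 * t) * (2 * heatK m 0 t + heatK m 0 t) := by
        gcongr; exact (norm_add_le _ _).trans (add_le_add hA hB)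
    _ = 3 * heatK m 0 t / (2 * t) := by ring

end HeatKernel

section Reflection

variable {m : ℕ} {t : ℝ}

lemma norm_reflect (z : EuclideanSpace ℝ (Fin (m + 1))) : ‖reflect z‖ = ‖z‖ := by
  simp only [EuclideanSpace.norm_eq, reflect]
  congr 1
  refine Finset.sum_congr rfl fun i _ => ?_
  split_ifs <;> simp

lemma sub_reflect_of_last_eq_zero {x y : EuclideanSpace ℝ (Fin (m + 1))}
    (hx : x (Fin.last m) = 0) : x - reflect y = reflect (x - y) := by
  ext i
  simp only [reflect, PiLp.sub_apply]
  split_ifs with hi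
  · simp [hi, hx]
  · rfl

lemma heatK_reflect (z : EuclideanSpace ℝ (Fin (m + 1))) :
    heatK m (reflect z) t = heatK m z t := by
  simp only [heatK, norm_reflect]

lemma Dlast_reflect (z : EuclideanSpace ℝ (Fin (m + 1))) :
    Dlast m (reflect z) t = -Dlast m z t := by
  rw [Dlast_eq, Dlast_eq, heatK_reflect]
  simp [reflect]

end Reflection

theorem stmt9_general (m : ℕ) (ε : ℝ) (hε : 0 < ε)
    (x y : EuclideanSpace ℝ (Fin (m + 1))) (t : ℝ)
    (hx : x (Fin.last m) = 0) (ht : 0 < t) :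
    fderiv ℝ (Gve m ε y t) x (EuclideanSpace.single (Fin.last m) 1) -
        (3 / (4 * ε ^ 2)) * Gve m ε y t x = 0 := by
  set a := 3 / (4 * ε ^ 2)
  set J := expLineIntegral a (fun z => Dlast m z t) (EuclideanSpace.single (Fin.last m) 1)
  have ha : 0 < a := by positivity
  have hG : Gve m ε y t =
      fun x => heatK m (x - y) t - heatK m (x - reflect y) t - 2 * J (x - reflect y) := rfl
  have hΓ (c) : DifferentiableAt ℝ (fun x => heatK m (x - c) t) x :=
    (differentiableAt_comp_sub c).2 ((contDiff_heatK (n := 1)).differentiable one_ne_zero _)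
  have hJ : DifferentiableAt ℝ (fun x => J (x - reflect y)) x :=
    (differentiableAt_comp_sub _).2 (hasFDerivAt_expLineIntegral ha contDiff_Dlast
      (norm_Dlast_le ht) (norm_fderiv_Dlast_le ht) _ _).differentiableAt
  rw [hG, fderiv_fun_sub ((hΓ y).fun_sub (hΓ _)) (hJ.const_mul 2), fderiv_fun_sub (hΓ y) (hΓ _),
    fderiv_const_mul hJ, fderiv_comp_sub, fderiv_comp_sub (f := fun w => heatK m w t),
    fderiv_comp_sub (f := fun w => heatK m w t)]
  simp only [sub_apply, smul_apply, smul_eq_mul, ← Dlast.eq_1]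
  rw [fderiv_expLineIntegral_apply ha contDiff_Dlast (norm_Dlast_le ht) (norm_fderiv_Dlast_le ht),
    sub_reflect_of_last_eq_zero hx, heatK_reflect, Dlast_reflect]
  ring

/-- for every boundary point `x` (`x_{m+1} = 0`), `y ∈ ℝ^{m+1}_+` and `t > 0`,
the oblique boundary condition `∂_{x_{m+1}} G^ε(x,y,t) - (3/(4ε²)) G^ε(x,y,t) = 0` holds. -/
theorem stmt9 (m : ℕ) (ε : ℝ) (hε : 0 < ε)
    (x y : EuclideanSpace ℝ (Fin (m + 1))) (t : ℝ)
    (hx : x (Fin.last m) = 0) (hy : 0 < y (Fin.last m)) (ht : 0 < t) :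
    fderiv ℝ (Gve m ε y t) x (EuclideanSpace.single (Fin.last m) 1) -
        (3 / (4 * ε ^ 2)) * Gve m ε y t x = 0 :=
  stmt9_general m ε hε x y t hx ht
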